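/- Let s, t be positive real numbers with s/t irrational. The quasisphere S²_{s,t} = S³_{s,t}/N, i.e. the orbit space of the ellipsoid S³_{s,t} under the componentwise action of N = {(e^{2πisθ}, e^{2πitθ}) : θ ∈ ℝ}, equipped with the quotient topology, is not a Hausdorff topological space. -/

import Mathlib

open Complex

/-- `expc x = e^{2πix}`. -/
noncomputable def expc (x : ℝ) : ℂ := Complex.exp (2 * Real.pi * Complex.I * x)

/-- The ellipsoid `S³_{s,t} = {(z,w) ∈ ℂ² : s|z|² + t|w|² = st}`. -/
def ellipsoidR (s t : ℝ) : Set (ℂ × ℂ) :=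
  {z | s * ‖z.1‖ ^ 2 + t * ‖z.2‖ ^ 2 = s * t}

/-- Orbit relation of the componentwise action of `N = {(e^{2πisθ}, e^{2πitθ}) : θ ∈ ℝ}`
on the ellipsoid `S³_{s,t}`. -/
noncomputable def orbitRelR (s t : ℝ) (x y : ellipsoidR s t) : Prop :=
  ∃ θ : ℝ, (y : ℂ × ℂ) = (expc (s * θ) * (x : ℂ × ℂ).1, expc (t * θ) * (x : ℂ × ℂ).2)

/-! The points `(a, b)` and `(-a, b)` of the ellipsoid with `a, b ≠ 0` lie in different `N`-orbits:
`e^{2πisθ} = -1` and `e^{2πitθ} = 1` force `2sθ, tθ ∈ ℤ`, so `s/t ∈ ℚ`. Yet `θ = n/t` moves `(a, b)` to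
`(e^{2πi(n s/t + m)} a, b)` for all `n, m ∈ ℤ`, and `ℤ(s/t) + ℤ` is dense in `ℝ`, so `(-a, b)` lies in
the closure of the orbit of `(a, b)`. Orbits are therefore not closed, while points of a Hausdorff
(even T1) quotient have closed preimages. -/

lemma isClosed_setOf_rel_of_t1Space {X : Type*} [TopologicalSpace X] {r : X → X → Prop}
    (hr : Equivalence r) [T1Space (Quot r)] (x : X) : IsClosed {y | r x y} := by
  convert (isClosed_singleton (x := Quot.mk r x)).preimage continuous_quot_mk using 1
  ext y
  exact (hr.quot_mk_eq_iff x y).symm.trans eq_comm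

section expc

lemma expc_add (u v : ℝ) : expc (u + v) = expc u * expc v := by
  simp only [expc, ← Complex.exp_add]
  push_cast
  ring_nf

lemma expc_zero : expc 0 = 1 := by simp [expc]

lemma expc_half : expc (1 / 2) = -1 := by
  rw [expc, ← Complex.exp_pi_mul_I]
  push_cast
  ring_nf

lemma norm_expc (x : ℝ) : ‖expc x‖ = 1 := by
  rw [expc, ← Complex.norm_exp_ofReal_mul_I (2 * Real.pi * x)]
  push_cast
  ring_nf

lemma continuous_expc : Continuous expc := by
  unfold expc
  fun_prop

lemma expc_eq_one_iff (x : ℝ) : expc x = 1 ↔ ∃ n : ℤ, x = n := by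
  have h2πi : 2 * Real.pi * Complex.I ≠ 0 := by simp [Real.pi_ne_zero]
  rw [expc, Complex.exp_eq_one_iff]
  refine exists_congr fun n ↦ ?_
  rw [mul_comm (n : ℂ), mul_right_inj' h2πi]
  exact_mod_cast Iff.rfl

lemma expc_intCast (n : ℤ) : expc n = 1 := (expc_eq_one_iff _).2 ⟨n, rfl⟩

lemma not_irrational_div_of_expc_mul {s t θ : ℝ} (hs : expc (s * θ) = -1)
    (ht : expc (t * θ) = 1) : ¬ Irrational (s / t) := by
  have hθ : θ ≠ 0 := by
    rintro rfl
    norm_num [expc_zero] at hs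
  obtain ⟨k, hk⟩ := (expc_eq_one_iff (2 * s * θ)).1 <| by
    rw [two_mul, add_mul, expc_add, hs, neg_one_mul, neg_neg]
  obtain ⟨m, hm⟩ := (expc_eq_one_iff _).1 ht
  have hst : s / t = ((k / (2 * m) : ℚ) : ℝ) := by
    push_cast
    rw [← hk, ← hm, ← mul_div_mul_right s t (mul_ne_zero two_ne_zero hθ)]
    ring_nf
  exact hst ▸ Rat.not_irrational _

end expc

section ellipsoid

variable {s t : ℝ}

lemma orbitRelR_equivalence (s t : ℝ) : Equivalence (orbitRelR s t) where
  refl _ := ⟨0, by simp [expc_zero]⟩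
  symm := by
    rintro x y ⟨θ, hy⟩
    refine ⟨-θ, ?_⟩
    ext <;> rw [hy] <;>
      simp only [← mul_assoc, ← expc_add, mul_neg, neg_add_cancel, expc_zero, one_mul]
  trans := by
    rintro x y z ⟨θ, hy⟩ ⟨θ', hz⟩
    refine ⟨θ + θ', ?_⟩
    simp only [hz, hy, ← mul_assoc, ← expc_add, mul_add, add_comm]

noncomputable def rotateFst (p : ellipsoidR s t) (u : ℝ) : ellipsoidR s t :=
  ⟨(expc u * p.1.1, p.1.2), by simpa [ellipsoidR, norm_expc] using p.2⟩

lemma continuous_rotateFst (p : ellipsoidR s t) : Continuous (rotateFst p) :=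
  ((continuous_expc.mul continuous_const).prodMk continuous_const).subtype_mk _

lemma rotateFst_mem_closure_orbit (hst : Irrational (s / t)) (p : ellipsoidR s t) (u : ℝ) :
    rotateFst p u ∈ closure {q | orbitRelR s t p q} := by
  have ht : t ≠ 0 := by
    rintro rfl
    exact hst.ne_zero (div_zero s)
  refine map_mem_closure (continuous_rotateFst p)
    ((dense_addSubgroupClosure_pair_iff (a := s / t) (b := 1)).2 (by rwa [div_one]) u) ?_
  intro v hv
  obtain ⟨n, m, rfl⟩ := AddSubgroup.mem_closure_pair.1 hv
  refine ⟨n / t, ?_⟩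
  have hsθ : s * (n / t) = n * (s / t) := by ring
  have htθ : t * (n / t) = n := mul_div_cancel₀ _ ht
  simp [rotateFst, hsθ, htθ, zsmul_eq_mul, expc_add, expc_intCast]

lemma not_orbitRelR_rotateFst_half (hst : Irrational (s / t)) {p : ellipsoidR s t}
    (h1 : p.1.1 ≠ 0) (h2 : p.1.2 ≠ 0) : ¬ orbitRelR s t p (rotateFst p (1 / 2)) := by
  rintro ⟨θ, hθ⟩
  simp only [rotateFst, expc_half, Prod.ext_iff] at hθ
  refine not_irrational_div_of_expc_mul (θ := θ) ?_ ?_ hst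
  · exact (mul_right_cancel₀ h1 hθ.1).symm
  · exact (mul_right_cancel₀ h2 ((one_mul _).trans hθ.2)).symm

lemma exists_mem_ellipsoidR_ne_zero (hs : 0 < s) (ht : 0 < t) :
    ∃ p : ellipsoidR s t, p.1.1 ≠ 0 ∧ p.1.2 ≠ 0 := by
  refine ⟨⟨(√(t / 2), √(s / 2)), ?_⟩, ?_⟩
  · simp only [ellipsoidR, Set.mem_ofPred_eq, Complex.norm_real, Real.norm_eq_abs, sq_abs,
      Real.sq_sqrt (half_pos ht).le, Real.sq_sqrt (half_pos hs).le]
    ring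
  · exact ⟨ofReal_ne_zero.2 (Real.sqrt_ne_zero'.2 (half_pos ht)),
      ofReal_ne_zero.2 (Real.sqrt_ne_zero'.2 (half_pos hs))⟩

end ellipsoid

/-- For `s, t > 0` with `s/t` irrational, the quasisphere `S²_{s,t} = S³_{s,t}/N`, with
the quotient topology, is not a Hausdorff topological space. -/
theorem quasisphere_not_hausdorff (s t : ℝ) (hs : 0 < s) (ht : 0 < t)
    (hst : Irrational (s / t)) :
    ¬ T2Space (Quot (orbitRelR s t)) := by
  intro _
  obtain ⟨p, hp1, hp2⟩ := exists_mem_ellipsoidR_ne_zero hs ht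
  have hclosed := isClosed_setOf_rel_of_t1Space (orbitRelR_equivalence s t) p
  exact not_orbitRelR_rotateFst_half hst hp1 hp2
    (hclosed.closure_subset (rotateFst_mem_closure_orbit hst p _))
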